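/- Let Θ be the linear isomorphism on decorated trees characterized recursively by Θ(X^k ∏_{i=1}^n I_{aᵢ}(τᵢ)) = Σ_{ℓ ∈ (ℕ^{d+1})^n} C(k; ℓ) · X^{k−|ℓ|} ∏_{i=1}^n I_{aᵢ−ℓᵢ}(Θ(τᵢ)), with Θ(X^k) = X^k. Then Θ is triangular for the grading by sums of edge decorations: Θ(τ) = τ + (terms of strictly lower grading), and hence Θ is a linear isomorphism. -/

import Mathlib

/-- Planar rooted trees with vertex decorations in `V` and edge decorations in `E`. -/
inductive RT (V E : Type) : Type where
  | node : V → List (E × RT V E) → RT V E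

/-- One-step reordering of children (at the root or at a deeper vertex). -/
inductive Swap {V E : Type} : RT V E → RT V E → Prop where
  | here (v : V) (l₁ l₂ : List (E × RT V E)) (p q : E × RT V E) :
      Swap (.node v (l₁ ++ p :: q :: l₂)) (.node v (l₁ ++ q :: p :: l₂))
  | child (v : V) (l₁ l₂ : List (E × RT V E)) (e : E) {t t' : RT V E} :
      Swap t t' → Swap (.node v (l₁ ++ (e, t) :: l₂)) (.node v (l₁ ++ (e, t') :: l₂))

/-- (Non-planar) decorated rooted trees: planar trees modulo reordering of children. -/
def QT (V E : Type) : Type := Quot (@Swap V E)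

/-- The linear span of decorated rooted trees, with rational coefficients. -/
abbrev Span (V E : Type) : Type := QT V E →₀ ℚ

def qt {V E : Type} (t : RT V E) : QT V E := Quot.mk _ t

/-- A tree, as a basis vector of the span. -/
noncomputable def bas {V E : Type} (t : RT V E) : Span V E := Finsupp.single (qt t) 1

/-- The element of the span given by a list of trees (sum with multiplicity). -/
noncomputable def ofList {V E : Type} (l : List (RT V E)) : Span V E := (l.map bas).sum

/-- Formal rational combination of planar trees, as an element of the span. -/
noncomputable def combo {V E : Type} (l : List (ℚ × RT V E)) : Span V E :=
  (l.map fun p => p.1 • bas p.2).sum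

mutual
/-- List of the graftings of `σ` on each vertex of a tree, via a new `a`-edge. -/
def graftT {V E : Type} (a : E) (σ : RT V E) : RT V E → List (RT V E)
  | .node v l => .node v ((a, σ) :: l) :: (graftL a σ l).map (.node v)
/-- Auxiliary: graftings of `σ` inside one of the listed subtrees. -/
def graftL {V E : Type} (a : E) (σ : RT V E) :
    List (E × RT V E) → List (List (E × RT V E))
  | [] => []
  | (e, t) :: r =>
      ((graftT a σ t).map fun t' => (e, t') :: r)
        ++ ((graftL a σ r).map fun r' => (e, t) :: r')
end

/-- Multi-indices in `ℕ^{d+1}`. -/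
abbrev Nd (d : ℕ) : Type := Fin (d + 1) → ℕ

/-- Componentwise binomial coefficient on `ℕ^{d+1}` (zero if some component exceeds). -/
def binom {d : ℕ} (n ℓ : Nd d) : ℕ := ∏ c, Nat.choose (n c) (ℓ c)

/-- The scaled degree `|n|_s = Σ_c s_c · n_c` of a multi-index. -/
def sdeg {d : ℕ} (s : Nd d) (n : Nd d) : ℕ := ∑ c, s c * n c

mutual
/-- The grading of a decorated tree: the sum of the `|·|_s`-degrees of its edge
decorations. -/
def gradT {L : Type} {d : ℕ} (s : Nd d) : RT (Nd d) (L × Nd d) → ℕ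
  | .node _ l => gradL s l
def gradL {L : Type} {d : ℕ} (s : Nd d) : List ((L × Nd d) × RT (Nd d) (L × Nd d)) → ℕ
  | [] => 0
  | (e, t) :: r => sdeg s e.2 + gradT s t + gradL s r
end

mutual
/-- The isomorphism `Θ` on (planar representatives of) decorated trees, characterized
recursively by `Θ(X^k ∏ᵢ I_{aᵢ}(τᵢ)) = Σ_ℓ C(k;ℓ) X^{k−|ℓ|} ∏ᵢ I_{aᵢ−ℓᵢ}(Θ(τᵢ))`
(with `Θ(X^k) = X^k`); the multinomial `C(k;ℓ)` is produced as an iterated product of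
binomial coefficients while threading the remaining root decoration through the list of
root branches; terms with negative decorations vanish.  The result is a formal rational
combination of planar trees. -/
noncomputable def ThT {L : Type} {d : ℕ} :
    RT (Nd d) (L × Nd d) → List (ℚ × RT (Nd d) (L × Nd d))
  | .node k l => (ThL k l).map fun p => (p.1, RT.node p.2.1 p.2.2)
/-- Auxiliary: processes the root branches, threading the remaining root decoration. -/
noncomputable def ThL {L : Type} {d : ℕ} (k : Nd d) :
    List ((L × Nd d) × RT (Nd d) (L × Nd d)) →
      List (ℚ × (Nd d × List ((L × Nd d) × RT (Nd d) (L × Nd d))))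
  | [] => [(1, (k, []))]
  | (a, t) :: r =>
      (Finset.Iic (k ⊓ a.2)).toList.flatMap fun ℓ =>
        (ThT t).flatMap fun p =>
          (ThL (k - ℓ) r).map fun q =>
            ((binom k ℓ : ℚ) * p.1 * q.1, (q.2.1, ((a.1, a.2 - ℓ), p.2) :: q.2.2))
end


/-! Every term of `Θ(τ)` is obtained from `τ` by lowering edge decorations `aᵢ` by some
`ℓᵢ ≤ aᵢ` (and the vertex decoration by `|ℓ|`), recursively in the subtrees, so its grading is at
most that of `τ`, with equality only when every `ℓᵢ` vanishes (the scaling `s` is positive), i.e.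
for the single term `τ` itself, with coefficient `1`.  Hence `N = Θ - 1` strictly lowers the
grading, so it is locally nilpotent, and `Θ = 1 + N` is inverted by the finite geometric series
`∑ᵢ (-N)ⁱ`. -/

theorem Module.End.bijective_one_add_of_forall_exists_pow_apply_eq_zero {R M : Type*} [Ring R]
    [AddCommGroup M] [Module R M] (N : Module.End R M) (hN : ∀ x, ∃ n, (N ^ n) x = 0) :
    Function.Bijective ⇑(1 + N) := by
  have hneg : ∀ x n, (N ^ n) x = 0 → ((-N) ^ n) x = 0 := fun x n h => by
    rw [neg_pow, Module.End.mul_apply, h, map_zero]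
  constructor
  · refine (injective_iff_map_eq_zero _).2 fun x hx => ?_
    obtain ⟨n, hn⟩ := hN x
    have := congr($(geom_sum_mul_neg (-N) n) x)
    rw [sub_neg_eq_add, Module.End.mul_apply, hx, map_zero, LinearMap.sub_apply, hneg x n hn]
      at this
    simpa using this.symm
  · intro y
    obtain ⟨n, hn⟩ := hN y
    refine ⟨(∑ i ∈ Finset.range n, (-N) ^ i) y, ?_⟩
    have := congr($(mul_neg_geom_sum (-N) n) y)
    rwa [sub_neg_eq_add, Module.End.mul_apply, LinearMap.sub_apply, hneg y n hn, sub_zero] at this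

theorem Finsupp.exists_pow_apply_eq_zero_of_grade_lt {ι R : Type*} [CommSemiring R]
    (N : Module.End R (ι →₀ R)) (G : ι → ℕ)
    (hN : ∀ i, N (Finsupp.single i 1) ∈ Finsupp.supported R R {j | G j < G i})
    (x : ι →₀ R) : ∃ n, (N ^ n) x = 0 := by
  have step : ∀ n, (Finsupp.supported R R {j | G j < n + 1}).map N ≤
      Finsupp.supported R R {j | G j < n} := by
    intro n
    rw [Finsupp.supported_eq_span_single, Submodule.map_span_le]
    rintro _ ⟨i, hi, rfl⟩
    exact Finsupp.supported_mono (fun j hj => lt_of_lt_of_le hj (Nat.lt_succ_iff.1 hi)) (hN i)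
  have hpow : ∀ n, ∀ x ∈ Finsupp.supported R R {j | G j < n}, (N ^ n) x = 0 := by
    intro n
    induction n with
    | zero => simp [Finsupp.supported_empty]
    | succ n ih =>
      intro x hx
      rw [pow_succ, Module.End.mul_apply]
      exact ih _ (step n ⟨x, hx, rfl⟩)
  exact ⟨x.support.sup G + 1, hpow _ x fun j hj => Nat.lt_succ_of_le (Finset.le_sup hj)⟩

theorem tsub_lt_self_of_le_of_ne_zero {α : Type*} [AddCommMonoid α] [PartialOrder α]
    [CanonicallyOrderedAdd α] [IsOrderedAddMonoid α] [Sub α] [OrderedSub α] [AddLeftReflectLE α]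
    {a b : α} (hba : b ≤ a) (hb : b ≠ 0) : a - b < a := by
  refine tsub_le_self.lt_of_ne fun h => hb ?_
  simpa [h] using (tsub_tsub_cancel_of_le hba).symm

theorem sdeg_strictMono {d : ℕ} {s : Nd d} (hs : ∀ c, 0 < s c) : StrictMono (sdeg s) := by
  intro a b hab
  obtain ⟨hle, c, hc⟩ := Pi.lt_def.1 hab
  exact Finset.sum_lt_sum (fun c _ => Nat.mul_le_mul_left _ (hle c))
    ⟨c, Finset.mem_univ c, Nat.mul_lt_mul_of_pos_left hc (hs c)⟩

theorem binom_zero_right {d : ℕ} (k : Nd d) : binom k 0 = 1 := by simp [binom]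

def LeadsWith {α : Type*} (g : α → ℕ) (x : α) (l : List (ℚ × α)) : Prop :=
  ∃ m, l.Perm ((1, x) :: m) ∧ ∀ p ∈ m, g p.2 < g x

namespace LeadsWith

variable {α β : Type*} {g : α → ℕ} {x : α} {l : List (ℚ × α)}

theorem grade_le (h : LeadsWith g x l) : ∀ p ∈ l, g p.2 ≤ g x := by
  obtain ⟨m, hperm, hlt⟩ := h
  intro p hp
  rcases List.mem_cons.1 (hperm.subset hp) with rfl | hp
  · rfl
  · exact (hlt p hp).le

theorem map {g' : β → ℕ} (h : LeadsWith g x l) (φ : α → β)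
    (hφ : ∀ y, g y < g x → g' (φ y) < g' (φ x)) :
    LeadsWith g' (φ x) (l.map fun p => (p.1, φ p.2)) := by
  obtain ⟨m, hperm, hlt⟩ := h
  refine ⟨m.map fun p => (p.1, φ p.2), hperm.map _, ?_⟩
  simp only [List.mem_map]
  rintro _ ⟨p, hp, rfl⟩
  exact hφ p.2 (hlt p hp)

theorem flatMap {A A' : List β} {b : β} (hA : A.Perm (b :: A')) {F : β → List (ℚ × α)}
    (hb : LeadsWith g x (F b)) (hlt : ∀ b' ∈ A', ∀ p ∈ F b', g p.2 < g x) :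
    LeadsWith g x (A.flatMap F) := by
  obtain ⟨m, hperm, hm⟩ := hb
  refine ⟨m ++ A'.flatMap F, ?_, ?_⟩
  · refine (hA.flatMap_right F).trans ?_
    rw [List.flatMap_cons]
    exact hperm.append_right _
  · simp only [List.mem_append, List.mem_flatMap]
    rintro p (hp | ⟨b', hb', hp⟩)
    exacts [hm p hp, hlt b' hb' p hp]

theorem combo_sub_bas_mem_supported {V E : Type} {g : RT V E → ℕ} {t : RT V E}
    {l : List (ℚ × RT V E)} (G : QT V E → ℕ) (hG : ∀ t, G (qt t) = g t) (h : LeadsWith g t l) :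
    combo l - bas t ∈ Finsupp.supported ℚ ℚ {q | G q < g t} := by
  obtain ⟨m, hperm, hlt⟩ := h
  have hcombo : combo l = bas t + combo m := by
    rw [combo, (hperm.map _).sum_eq, List.map_cons, List.sum_cons, one_smul, combo]
  rw [hcombo, add_sub_cancel_left, combo]
  refine list_sum_mem fun _ hx => ?_
  obtain ⟨p, hp, rfl⟩ := List.mem_map.1 hx
  refine Submodule.smul_mem _ _ (Finsupp.single_mem_supported ℚ 1 ?_)
  simpa [hG] using hlt p hp

end LeadsWith

section Theta

variable {L : Type} {d : ℕ} {s : Nd d}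

mutual

theorem leadsWith_ThT (hs : ∀ c, 0 < s c) :
    ∀ t : RT (Nd d) (L × Nd d), LeadsWith (gradT s) t (ThT t)
  | .node k l => by
    rw [ThT]
    exact (leadsWith_ThL hs k l).map (fun p => RT.node p.1 p.2) fun _ h => by simpa [gradT] using h

theorem leadsWith_ThL (hs : ∀ c, 0 < s c) :
    ∀ (k : Nd d) (l : List ((L × Nd d) × RT (Nd d) (L × Nd d))),
      LeadsWith (fun p => gradL s p.2) (k, l) (ThL k l)
  | k, [] => ⟨[], by rw [ThL], by simp⟩
  | k, (a, t) :: r => by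
    have ht_le := (leadsWith_ThT hs t).grade_le
    obtain ⟨mt, hmt, hmt_lt⟩ := leadsWith_ThT hs t
    have hr : ∀ k', LeadsWith (fun p => gradL s p.2) (k', r) (ThL k' r) :=
      fun k' => leadsWith_ThL hs k' r
    have h0 : (0 : Nd d) ∈ (Finset.Iic (k ⊓ a.2)).toList := by simp
    rw [ThL]
    refine LeadsWith.flatMap (List.perm_cons_erase h0) ?_ ?_
    · refine LeadsWith.flatMap hmt ?_ ?_
      · simpa [binom_zero_right] using
          (hr k).map (fun q => (q.1, (a, t) :: q.2)) fun _ h => by simpa [gradL] using h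
      · intro p hp _ hq
        obtain ⟨q, hqr, rfl⟩ := List.mem_map.1 hq
        have := hmt_lt p hp
        have : gradL s q.2.2 ≤ gradL s r := (hr _).grade_le q hqr
        simp only [gradL, tsub_zero]
        omega
    · intro ℓ hℓ _ hp
      simp only [List.mem_flatMap, List.mem_map] at hp
      obtain ⟨p, hp, q, hq, rfl⟩ := hp
      have hℓ0 : ℓ ≠ 0 := by
        rintro rfl
        exact ((Finset.nodup_toList _).mem_erase_iff.1 hℓ).1 rfl
      have hℓa : ℓ ≤ a.2 :=
        (Finset.mem_Iic.1 (Finset.mem_toList.1 (List.mem_of_mem_erase hℓ))).trans inf_le_right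
      have := sdeg_strictMono hs (tsub_lt_self_of_le_of_ne_zero hℓa hℓ0)
      have := ht_le p hp
      have : gradL s q.2.2 ≤ gradL s r := (hr _).grade_le q hq
      simp only [gradL]
      omega

end

end Theta

/-- **Triangularity and invertibility of `Θ`.**  Let `Θ` be the linear map on the span
of decorated trees (node decorations in `ℕ^{d+1}`, edge decorations in `𝔏 × ℕ^{d+1}`)
given on trees by the recursion
`Θ(X^k ∏ᵢ I_{aᵢ}(τᵢ)) = Σ_ℓ C(k;ℓ) X^{k−|ℓ|} ∏ᵢ I_{aᵢ−ℓᵢ}(Θ(τᵢ))`, `Θ(X^k) = X^k`.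
Then, for a scaling `s` with all `s_c > 0` and the grading `G` given by the sum of the
scaled edge decorations, `Θ(τ) = τ + (terms of strictly lower grading)`, and `Θ` is a
linear isomorphism. -/
theorem Theta_triangular_bijective {L : Type} {d : ℕ} (s : Nd d) (hs : ∀ c, 0 < s c)
    (G : QT (Nd d) (L × Nd d) → ℕ) (hG : ∀ t, G (qt t) = gradT s t)
    (Θ : Span (Nd d) (L × Nd d) →ₗ[ℚ] Span (Nd d) (L × Nd d))
    (hΘ : ∀ t : RT (Nd d) (L × Nd d), Θ (bas t) = combo (ThT t)) :
    (∀ t : RT (Nd d) (L × Nd d),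
        ∀ q ∈ (Θ (bas t) - bas t).support, G q < gradT s t) ∧
    Function.Bijective Θ := by
  have htri : ∀ t, Θ (bas t) - bas t ∈ Finsupp.supported ℚ ℚ {q | G q < gradT s t} := by
    intro t
    rw [hΘ]
    exact (leadsWith_ThT hs t).combo_sub_bas_mem_supported G hG
  refine ⟨fun t q hq => (Finsupp.mem_supported ℚ _).1 (htri t) hq, ?_⟩
  have hlower : ∀ q, (Θ - 1) (Finsupp.single q 1) ∈ Finsupp.supported ℚ ℚ {q' | G q' < G q} :=
    Quot.ind fun t => by
      rw [LinearMap.sub_apply, Module.End.one_apply, ← qt, ← bas, hG]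
      exact htri t
  simpa using Module.End.bijective_one_add_of_forall_exists_pow_apply_eq_zero (Θ - 1)
    (Finsupp.exists_pow_apply_eq_zero_of_grade_lt (Θ - 1) G hlower)
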